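/- arXiv:2104.09112 — 6 statements merged into one kernel-verified Lean document; each statement's English description precedes it below -/
import Mathlib

section
/- Validity of axiom (II)(g): let Y ⊆ X'. For any s ∈ A, if there exist t, u ∈ A with s =_X t, s ⪯_{X'} t, s ≺_{X''} t, and t =_X u, t ⪯_{X'\Y} u, t ≺_{X''∪Y} u, and φ holds at u, then there exists v ∈ A with s =_X v, s ⪯_{X'} v, s ≺_{X''∪Y} v, and φ holds at v. -/
/-- Agreement of strategy profiles on a set of players: s =_X t. -/
def eqOnSet {V O : Type*} (X : Set V) (s t : V → O) : Prop := ∀ x ∈ X, s x = t x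

/-- Group weak preference: s ⪯_X t. -/
def leG {V O : Type*} (le : V → (V → O) → (V → O) → Prop) (X : Set V) (s t : V → O) : Prop :=
  ∀ x ∈ X, le x s t

/-- Strict preference of a single player: s ≺_x t. -/
def ltP {V O : Type*} (le : V → (V → O) → (V → O) → Prop) (x : V) (s t : V → O) : Prop :=
  le x s t ∧ ¬ le x t s

/-- Group strict preference: s ≺_X t. -/
def ltG {V O : Type*} (le : V → (V → O) → (V → O) → Prop) (X : Set V) (s t : V → O) : Prop :=
  ∀ x ∈ X, ltP le x s t

/-- Validity of axiom (II)(g). -/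
theorem axiom_IIg (V O : Type*) (A : Set (V → O)) (le : V → (V → O) → (V → O) → Prop)
    (hrefl : ∀ x s, le x s s) (htrans : ∀ x s t u, le x s t → le x t u → le x s u)
    (X X' X'' Y : Set V) (hY : Y ⊆ X') (s : V → O) (φ : (V → O) → Prop)
    (h : ∃ t ∈ A, eqOnSet X s t ∧ leG le X' s t ∧ ltG le X'' s t ∧
      ∃ u ∈ A, eqOnSet X t u ∧ leG le (X' \ Y) t u ∧ ltG le (X'' ∪ Y) t u ∧ φ u) :
    ∃ v ∈ A, eqOnSet X s v ∧ leG le X' s v ∧ ltG le (X'' ∪ Y) s v ∧ φ v := by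
  obtain ⟨t, htA, heq1, hle1, hlt1, u, huA, heq2, hle2, hlt2, hφ⟩ := h
  refine ⟨u, huA, fun x hx => (heq1 x hx).trans (heq2 x hx), ?_, ?_, hφ⟩
  · intro x hx
    by_cases hxY : x ∈ Y
    · exact htrans x s t u (hle1 x hx) (hlt2 x (Or.inr hxY)).1
    · exact htrans x s t u (hle1 x hx) (hle2 x ⟨hx, hxY⟩)
  · intro x hx
    have hst : le x s t := by
      cases hx with
      | inl h => exact (hlt1 x h).1
      | inr h => exact hle1 x (hY h)
    have htu := hlt2 x hx
    exact ⟨htrans x s t u hst htu.1, fun hus => htu.2 (htrans x u s t hus hst)⟩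
end

section
/- Validity of axiom (II)(h): let Y ⊆ X''. For any s ∈ A, if there exist t, u ∈ A with s =_X t, s ⪯_{X'} t, s ≺_{X''} t, and t =_X u, t ⪯_{X'∪Y} u, t ≺_{X''\Y} u, and φ holds at u, then there exists v ∈ A with s =_X v, s ⪯_{X'∪Y} v, s ≺_{X''} v, and φ holds at v. -/
/-- Validity of axiom (II)(h). -/
theorem axiom_IIh (V O : Type*) (A : Set (V → O)) (le : V → (V → O) → (V → O) → Prop)
    (hrefl : ∀ x s, le x s s) (htrans : ∀ x s t u, le x s t → le x t u → le x s u)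
    (X X' X'' Y : Set V) (hY : Y ⊆ X'') (s : V → O) (φ : (V → O) → Prop)
    (h : ∃ t ∈ A, eqOnSet X s t ∧ leG le X' s t ∧ ltG le X'' s t ∧
      ∃ u ∈ A, eqOnSet X t u ∧ leG le (X' ∪ Y) t u ∧ ltG le (X'' \ Y) t u ∧ φ u) :
    ∃ v ∈ A, eqOnSet X s v ∧ leG le (X' ∪ Y) s v ∧ ltG le X'' s v ∧ φ v := by
  obtain ⟨t, htA, hst, hst', hst'', u, huA, htu, htu', htu'', hφ⟩ := h
  refine ⟨u, huA, ?_, ?_, ?_, hφ⟩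
  · intro x hx; rw [hst x hx, htu x hx]
  · intro x hx
    rcases hx with hx | hx
    · exact htrans x _ _ _ (hst' x hx) (htu' x (Or.inl hx))
    · exact htrans x _ _ _ (hst'' x (hY hx)).1 (htu' x (Or.inr hx))
  · intro x hx
    obtain ⟨h1, h2⟩ := hst'' x hx
    by_cases hxY : x ∈ Y
    · have h3 := htu' x (Or.inr hxY)
      exact ⟨htrans x _ _ _ h1 h3, fun hus => h2 (htrans x _ _ _ h3 hus)⟩
    · obtain ⟨h3, h4⟩ := htu'' x ⟨hx, hxY⟩
      exact ⟨htrans x _ _ _ h1 h3, fun hus => h4 (htrans x _ _ _ hus h1)⟩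
end

section
/- Validity of the Transfer axiom (IV)(a): for any s ∈ A, if (i) for every t ∈ A with s =_X t, s ⪯_{X'} t, s ≺_{X''} t we have s =_y t for all y ∈ Y, and (ii) φ holds at every t ∈ A with s =_Y t, s ⪯_{X'} t, s ≺_{X''} t, then φ holds at every t ∈ A with s =_X t, s ⪯_{X'} t, s ≺_{X''} t. -/
/-- Validity of the Transfer axiom (IV)(a). -/
theorem axiom_IVa (V O : Type*) (A : Set (V → O)) (le : V → (V → O) → (V → O) → Prop)
    (hrefl : ∀ x s, le x s s) (htrans : ∀ x s t u, le x s t → le x t u → le x s u)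
    (X X' X'' Y : Set V) (s : V → O) (φ : (V → O) → Prop)
    (hdep : ∀ t ∈ A, eqOnSet X s t → leG le X' s t → ltG le X'' s t →
      ∀ y ∈ Y, eqOnSet {y} s t)
    (hbox : ∀ t ∈ A, eqOnSet Y s t → leG le X' s t → ltG le X'' s t → φ t) :
    ∀ t ∈ A, eqOnSet X s t → leG le X' s t → ltG le X'' s t → φ t := by
  intro t ht hX hX' hX''
  exact hbox t ht (fun y hy => hdep t ht hX hX' hX'' y hy y rfl) hX' hX''
end

section
/- Validity of axiom (II)(j): for any s ∈ A, if φ holds at s and ψ holds at some t ∈ A with s =_X t, s ⪯_{X'} t, s ≺_{X''} t, then either there exists x ∈ X' and u ∈ A with s =_X u, s ⪯_{X'} u, s ≺_{X''∪{x}} u at which ψ holds, or there exists u ∈ A with s =_X u, s ⪯_{X'} u, s ≺_{X''} u at which ψ holds and such that there is v ∈ A with u =_X v, u ⪯_{X'} v at which φ holds. (Assume X' is finite, or that each ⪯_x satisfies: ¬(t ⪯_x s) or t ⪯_x s is decidable in the classical sense.) -/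
/-- Validity of axiom (II)(j). -/
theorem axiom_IIj (V O : Type*) (A : Set (V → O)) (le : V → (V → O) → (V → O) → Prop)
    (hrefl : ∀ x s, le x s s) (htrans : ∀ x s t u, le x s t → le x t u → le x s u)
    (X X' X'' : Set V) (s : V → O) (hs : s ∈ A) (φ ψ : (V → O) → Prop)
    (hφ : φ s)
    (t : V → O) (ht : t ∈ A) (h1 : eqOnSet X s t) (h2 : leG le X' s t)
    (h3 : ltG le X'' s t) (hψ : ψ t) :
    (∃ x ∈ X', ∃ u ∈ A, eqOnSet X s u ∧ leG le X' s u ∧ ltG le (X'' ∪ {x}) s u ∧ ψ u) ∨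
    (∃ u ∈ A, eqOnSet X s u ∧ leG le X' s u ∧ ltG le X'' s u ∧ ψ u ∧
      ∃ v ∈ A, eqOnSet X u v ∧ leG le X' u v ∧ φ v) := by
  by_cases h : ∃ x ∈ X', ¬ le x t s
  · obtain ⟨x, hx, hxlt⟩ := h
    exact Or.inl ⟨x, hx, t, ht, h1, h2, fun y hy => hy.elim (h3 y)
      (fun hyx => by rw [Set.mem_singleton_iff] at hyx; subst hyx; exact ⟨h2 y hx, hxlt⟩), hψ⟩
  · push_neg at h
    exact Or.inr ⟨t, ht, h1, h2, h3, hψ, s, hs,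
      fun y hy => (h1 y hy).symm, fun y hy => h y hy, hφ⟩
end

section
/- Cover theorem (⊨ ⋀_{X'∈𝔠(X)} Pa_{-X} X' → Pa X): let 𝔠 be a family of subsets of X with ⋃ 𝔠 = X. Define Pa_Y(X')(s) iff for every x ∈ X' there is no t ∈ A with s =_Y t, s ⪯_{X'\{x}} t, s ≺_x t. If Pa_{V\X}(X')(s) holds for every X' ∈ 𝔠, then Pa_{V\X}(X)(s) holds, i.e., s is strongly Pareto optimal for X. -/
/-- Cover theorem: ⊨ ⋀_{X'∈𝔠(X)} Pa_{-X} X' → Pa X. -/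
theorem cover_pareto (V O : Type*) (A : Set (V → O))
    (le : V → (V → O) → (V → O) → Prop)
    (hrefl : ∀ x s, le x s s) (htrans : ∀ x s t u, le x s t → le x t u → le x s u)
    (X : Set V) (C : Set (Set V)) (hC : ∀ X' ∈ C, X' ⊆ X) (hcov : ⋃₀ C = X)
    (s : V → O)
    (h : ∀ X' ∈ C, ∀ x ∈ X',
      ¬ ∃ t ∈ A, eqOnSet Xᶜ s t ∧ leG le (X' \ {x}) s t ∧ ltP le x s t) :
    ∀ x ∈ X, ¬ ∃ t ∈ A, eqOnSet Xᶜ s t ∧ leG le (X \ {x}) s t ∧ ltP le x s t := by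
  intro x hx ⟨t, htA, heq, hle, hlt⟩
  obtain ⟨X', hX'C, hxX'⟩ : ∃ X' ∈ C, x ∈ X' := by
    rw [← hcov] at hx; exact hx
  exact h X' hX'C x hxX' ⟨t, htA, heq, fun y hy => hle y ⟨hC X' hX'C hy.1, hy.2⟩, hlt⟩
end

section
/- Corollary (⊨ Ca X → Ca₁ X): suppose s ∈ A is such that (i) s is a Nash equilibrium for X (for each x ∈ X there is no t ∈ A with s =_{V\{x}} t and s ≺_x t) and (ii) there is a cover 𝔠 of X (family of subsets of X with union X) such that for all X' ∈ 𝔠, Pa_{V\X}(X')(s) holds. Then s is strongly Pareto optimal for X and is a Nash equilibrium for X. -/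
/-- Corollary: ⊨ Ca X → Ca₁ X. If s is a Nash equilibrium for X and there is a cover
𝔠 of X with Pa_{-X}(X')(s) for all X' ∈ 𝔠, then s is strongly Pareto optimal for X
and a Nash equilibrium for X. -/
theorem ca_imp_ca1 (V O : Type*) (A : Set (V → O))
    (le : V → (V → O) → (V → O) → Prop)
    (hrefl : ∀ x s, le x s s) (htrans : ∀ x s t u, le x s t → le x t u → le x s u)
    (X : Set V) (s : V → O)
    (hnash : ∀ x ∈ X, ¬ ∃ t ∈ A, eqOnSet {x}ᶜ s t ∧ ltP le x s t)
    (C : Set (Set V)) (hC : ∀ X' ∈ C, X' ⊆ X) (hcov : ⋃₀ C = X)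
    (hpa : ∀ X' ∈ C, ∀ x ∈ X',
      ¬ ∃ t ∈ A, eqOnSet Xᶜ s t ∧ leG le (X' \ {x}) s t ∧ ltP le x s t) :
    (∀ x ∈ X, ¬ ∃ t ∈ A, eqOnSet Xᶜ s t ∧ leG le (X \ {x}) s t ∧ ltP le x s t) ∧
    (∀ x ∈ X, ¬ ∃ t ∈ A, eqOnSet {x}ᶜ s t ∧ ltP le x s t) := by
  refine ⟨?_, hnash⟩
  intro x hx ⟨t, htA, heq, hle, hlt⟩
  obtain ⟨X', hX'C, hxX'⟩ : ∃ X' ∈ C, x ∈ X' := by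
    have : x ∈ ⋃₀ C := hcov ▸ hx
    simpa using this
  exact hpa X' hX'C x hxX' ⟨t, htA, heq,
    fun y hy => hle y ⟨hC X' hX'C hy.1, hy.2⟩, hlt⟩
end
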